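/- arXiv:1605.01314 — 4 statements merged into one kernel-verified Lean document; each statement's English description precedes it below -/
import Mathlib

section
/- The bilinear form φ^{(1)} on 𝔡_t^{(n)} defined by φ^{(1)}(M1 ⊗ D^{k1}Z^{l1}, M2 ⊗ D^{k2}Z^{l2}) = l1 · t^{k1·l1} · δ_{k1,-k2} · δ_{l1,-l2} · tr(M1·M2) is a Lie algebra 2-cocycle: it is antisymmetric and satisfies φ^{(1)}([X,Y],W) + φ^{(1)}([Y,W],X) + φ^{(1)}([W,X],Y) = 0 for all X, Y, W in 𝔡_t^{(n)}. -/
/-!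
Both identities are additive in each argument, so it suffices to check them on elements
`A ⊗ D^k Z^l`. For three of these, of degrees `p, q, r ∈ ℤ²`, every cocycle term vanishes unless
`p + q + r = 0`. In that case the term `φ([A_p, B_q], C_r)` equals
`-r.2 · (t^α tr(ABC) - t^β tr(ACB))`, and the exponents `α, β` as well as the two traces are
invariant under cyclic permutation of the three factors; the sum is therefore a multiple of
`p.2 + q.2 + r.2 = 0`.
-/

/-- The matrix quantum torus `𝔡_t^{(n)} = M_n(ℂ) ⊗ 𝔡_t`, realized as finitely supported
families of matrices indexed by `(k,l) ∈ ℤ²`, where `(k,l)` records `D^k Z^l`. -/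
abbrev DT (n : ℕ) := (ℤ × ℤ) →₀ Matrix (Fin n) (Fin n) ℂ

/-- The associative product of `𝔡_t^{(n)}`: since `DZ = t·ZD`, one has
`(M1 ⊗ D^{k1}Z^{l1})(M2 ⊗ D^{k2}Z^{l2}) = t^{-l1·k2} M1M2 ⊗ D^{k1+k2}Z^{l1+l2}`. -/
noncomputable def dmul (n : ℕ) (t : ℂ) (X Y : DT n) : DT n :=
  X.sum fun p A => Y.sum fun q B =>
    Finsupp.single (p.1 + q.1, p.2 + q.2) (t ^ (-(p.2 * q.1)) • (A * B))

/-- The commutator Lie bracket on `𝔡_t^{(n)}`. -/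
noncomputable def dbr (n : ℕ) (t : ℂ) (X Y : DT n) : DT n :=
  dmul n t X Y - dmul n t Y X

/-- The bilinear form `φ^{(1)}`, given on basis elements by
`φ^{(1)}(M1 ⊗ D^{k1}Z^{l1}, M2 ⊗ D^{k2}Z^{l2}) = l1·t^{k1·l1}·δ_{k1,-k2}·δ_{l1,-l2}·tr(M1M2)`. -/
noncomputable def phi1 (n : ℕ) (t : ℂ) (X Y : DT n) : ℂ :=
  X.sum fun p A => (p.2 : ℂ) * t ^ (p.1 * p.2) * (A * Y (-p.1, -p.2)).trace

namespace Finsupp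

variable {α β γ M N P G : Type*} [AddZeroClass M] [AddZeroClass N] [AddZeroClass P] [AddGroup G]

theorem eq_zero_of_additive_of_single {f : (α →₀ M) → G}
    (hadd : ∀ x y, f (x + y) = f x + f y) (hsingle : ∀ a m, f (single a m) = 0) (x : α →₀ M) :
    f x = 0 :=
  DFunLike.congr_fun (addHom_ext (f := AddMonoidHom.mk' f hadd) (g := 0) hsingle) x

theorem eq_zero_of_biadditive_of_single {f : (α →₀ M) → (β →₀ N) → G}
    (hadd_left : ∀ x x' y, f (x + x') y = f x y + f x' y)
    (hadd_right : ∀ x y y', f x (y + y') = f x y + f x y')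
    (hsingle : ∀ a m b n, f (single a m) (single b n) = 0) (x : α →₀ M) (y : β →₀ N) :
    f x y = 0 := by
  refine congrFun (eq_zero_of_additive_of_single (f := f) (fun x x' ↦ funext (hadd_left x x'))
    (fun a m ↦ funext fun y ↦ ?_) x) y
  exact eq_zero_of_additive_of_single (hadd_right _) (hsingle a m) y

theorem eq_zero_of_triadditive_of_single {f : (α →₀ M) → (β →₀ N) → (γ →₀ P) → G}
    (hadd₁ : ∀ x x' y z, f (x + x') y z = f x y z + f x' y z)
    (hadd₂ : ∀ x y y' z, f x (y + y') z = f x y z + f x y' z)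
    (hadd₃ : ∀ x y z z', f x y (z + z') = f x y z + f x y z')
    (hsingle : ∀ a m b n c p, f (single a m) (single b n) (single c p) = 0)
    (x : α →₀ M) (y : β →₀ N) (z : γ →₀ P) :
    f x y z = 0 := by
  refine congrFun (congrFun (eq_zero_of_additive_of_single (f := f)
    (fun x x' ↦ funext₂ (hadd₁ x x')) (fun a m ↦ funext₂ fun y z ↦ ?_) x) y) z
  exact eq_zero_of_biadditive_of_single (hadd₂ _) (hadd₃ _) (hsingle a m) y z

end Finsupp

open Finsupp

section
variable (n : ℕ) (t : ℂ)

lemma phi1_add_left (X X' Y : DT n) :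
    phi1 n t (X + X') Y = phi1 n t X Y + phi1 n t X' Y := by
  unfold phi1
  apply sum_add_index' <;> intros <;> simp [add_mul, Matrix.trace_add, mul_add]

lemma phi1_add_right (X Y Y' : DT n) :
    phi1 n t X (Y + Y') = phi1 n t X Y + phi1 n t X Y' := by
  simp only [phi1, Finsupp.add_apply, Matrix.trace_add, mul_add, sum_add]

lemma dmul_add_left (X X' Y : DT n) :
    dmul n t (X + X') Y = dmul n t X Y + dmul n t X' Y := by
  unfold dmul
  apply sum_add_index' <;> intros <;> simp [add_mul, smul_add, single_add, sum_add]

lemma dmul_add_right (X Y Y' : DT n) :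
    dmul n t X (Y + Y') = dmul n t X Y + dmul n t X Y' := by
  simp only [dmul, ← sum_add]
  refine sum_congr fun p _ ↦ ?_
  apply sum_add_index' <;> intros <;> simp [mul_add, smul_add, single_add]

lemma dbr_add_left (X X' Y : DT n) :
    dbr n t (X + X') Y = dbr n t X Y + dbr n t X' Y := by
  simp only [dbr, dmul_add_left, dmul_add_right]
  abel

lemma dbr_add_right (X Y Y' : DT n) :
    dbr n t X (Y + Y') = dbr n t X Y + dbr n t X Y' := by
  simp only [dbr, dmul_add_left, dmul_add_right]
  abel

lemma phi1_single_single (p q : ℤ × ℤ) (A B : Matrix (Fin n) (Fin n) ℂ) :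
    phi1 n t (single p A) (single q B) =
      if p + q = 0 then (p.2 : ℂ) * t ^ (p.1 * p.2) * (A * B).trace else 0 := by
  rw [phi1, sum_single_index (by simp), show ((-p.1, -p.2) : ℤ × ℤ) = -p from rfl, single_apply]
  simp only [eq_neg_iff_add_eq_zero, add_comm q p]
  split_ifs <;> simp

lemma dbr_single_single (p q : ℤ × ℤ) (A B : Matrix (Fin n) (Fin n) ℂ) :
    dbr n t (single p A) (single q B) =
      single (p + q) (t ^ (-(p.2 * q.1)) • (A * B) - t ^ (-(q.2 * p.1)) • (B * A)) := by
  simp only [dbr, dmul, sum_single_index, zero_mul, mul_zero, smul_zero, single_zero]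
  rw [show (p.1 + q.1, p.2 + q.2) = p + q from rfl, show (q.1 + p.1, q.2 + p.2) = q + p from rfl,
    add_comm q, ← single_sub]

lemma phi1_single_single_eq_neg (p q : ℤ × ℤ) (A B : Matrix (Fin n) (Fin n) ℂ) :
    phi1 n t (single p A) (single q B) = -phi1 n t (single q B) (single p A) := by
  rw [phi1_single_single, phi1_single_single, add_comm q]
  split_ifs with h
  · obtain rfl := eq_neg_of_add_eq_zero_right h
    simp only [Prod.fst_neg, Prod.snd_neg, neg_mul_neg, Matrix.trace_mul_comm B A]
    push_cast
    ring
  · simp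

variable {t} in
lemma phi1_dbr_single_single (ht : t ≠ 0) (p q r : ℤ × ℤ) (A B C : Matrix (Fin n) (Fin n) ℂ) :
    phi1 n t (dbr n t (single p A) (single q B)) (single r C) =
      if p + q + r = 0 then
        -r.2 * (t ^ (p.1 * p.2 + p.1 * q.2 + q.1 * q.2) * (A * B * C).trace -
          t ^ (p.1 * p.2 + p.2 * q.1 + q.1 * q.2) * (A * C * B).trace)
      else 0 := by
  rw [dbr_single_single, phi1_single_single]
  split_ifs with h
  · obtain rfl := eq_neg_of_add_eq_zero_right h
    obtain ⟨a, b⟩ := p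
    obtain ⟨c, d⟩ := q
    have hABC : t ^ ((a + c) * (b + d)) * t ^ (-(b * c)) = t ^ (a * b + a * d + c * d) := by
      rw [← zpow_add₀ ht]; congr 1; ring
    have hACB : t ^ ((a + c) * (b + d)) * t ^ (-(d * a)) = t ^ (a * b + b * c + c * d) := by
      rw [← zpow_add₀ ht]; congr 1; ring
    simp only [Matrix.sub_mul, Matrix.smul_mul, Matrix.trace_sub, Matrix.trace_smul, smul_eq_mul,
      Matrix.trace_mul_cycle B A C, Matrix.trace_mul_cycle C B A, Prod.fst_add, Prod.snd_add,
      Prod.snd_neg, ← hABC, ← hACB]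
    push_cast
    ring
  · rfl

variable {t} in
lemma phi1_dbr_cyclic_single (ht : t ≠ 0) (p q r : ℤ × ℤ) (A B C : Matrix (Fin n) (Fin n) ℂ) :
    phi1 n t (dbr n t (single p A) (single q B)) (single r C) +
      phi1 n t (dbr n t (single q B) (single r C)) (single p A) +
      phi1 n t (dbr n t (single r C) (single p A)) (single q B) = 0 := by
  simp only [phi1_dbr_single_single n ht, show q + r + p = p + q + r by abel,
    show r + p + q = p + q + r by abel]
  split_ifs with h
  · obtain rfl := eq_neg_of_add_eq_zero_right h
    simp only [Prod.fst_add, Prod.snd_add, Prod.fst_neg, Prod.snd_neg,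
      Matrix.trace_mul_cycle A B C, Matrix.trace_mul_cycle B C A, Matrix.trace_mul_cycle A C B,
      Matrix.trace_mul_cycle C B A]
    push_cast
    -- the exponents of `t` agree only after normalisation, which `ring_nf` also performs
    ring_nf
  · simp

lemma phi1_antisymm (X Y : DT n) : phi1 n t X Y = -phi1 n t Y X := by
  rw [eq_neg_iff_add_eq_zero]
  refine eq_zero_of_biadditive_of_single (f := fun X Y ↦ phi1 n t X Y + phi1 n t Y X)
    (fun X X' Y ↦ ?_) (fun X Y Y' ↦ ?_) (fun p A q B ↦ ?_) X Y
  · simp only [phi1_add_left, phi1_add_right]; ring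
  · simp only [phi1_add_left, phi1_add_right]; ring
  · rw [phi1_single_single_eq_neg, neg_add_cancel]

variable {t} in
lemma phi1_dbr_cyclic (ht : t ≠ 0) (X Y W : DT n) :
    phi1 n t (dbr n t X Y) W + phi1 n t (dbr n t Y W) X + phi1 n t (dbr n t W X) Y = 0 := by
  refine eq_zero_of_triadditive_of_single
    (f := fun X Y W ↦
      phi1 n t (dbr n t X Y) W + phi1 n t (dbr n t Y W) X + phi1 n t (dbr n t W X) Y)
    (fun X X' Y W ↦ ?_) (fun X Y Y' W ↦ ?_) (fun X Y W W' ↦ ?_)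
    (fun p A q B r C ↦ phi1_dbr_cyclic_single n ht p q r A B C) X Y W
  all_goals simp only [dbr_add_left, dbr_add_right, phi1_add_left, phi1_add_right]; ring

end

/-- `φ^{(1)}` is a Lie algebra 2-cocycle on `𝔡_t^{(n)}`: it is antisymmetric and
satisfies `φ([X,Y],W) + φ([Y,W],X) + φ([W,X],Y) = 0`. -/
theorem stmt2 (n : ℕ) (t : ℂ) (ht : t ≠ 0) :
    (∀ X Y : DT n, phi1 n t X Y = - phi1 n t Y X) ∧
    (∀ X Y W : DT n,
      phi1 n t (dbr n t X Y) W + phi1 n t (dbr n t Y W) X + phi1 n t (dbr n t W X) Y = 0) :=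
  ⟨phi1_antisymm n t, phi1_dbr_cyclic n ht⟩
end

section
/- The bilinear form φ on 𝒟_s^{(n)} defined by φ(M1 ⊗ f1(∂)x^{l1}, M2 ⊗ f2(∂)x^{l2}) = tr(M1 M2)·Σ_{a=0}^{l1−1} f1(a·s)·f2((a−l1)·s) if l1 = −l2 > 0, = −tr(M1 M2)·Σ_{a=0}^{−l1−1} f2(a·s)·f1((a+l1)·s) if l1 = −l2 < 0, and = 0 otherwise, is a Lie algebra 2-cocycle on 𝒟_s^{(n)}: it is antisymmetric and satisfies the cocycle identity φ([X,Y],W) + φ([Y,W],X) + φ([W,X],Y) = 0. -/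
open Polynomial

/-- `𝒟_s^{(n)} = M_n(ℂ) ⊗ 𝒟_s`, realized as finitely supported families of matrices of
polynomials indexed by `l ∈ ℤ`: the component at `l` is the matrix `A(∂)` of the term `A(∂)x^l`. -/
abbrev DiffT (n : ℕ) := ℤ →₀ Matrix (Fin n) (Fin n) (Polynomial ℂ)

/-- Substitution `∂ ↦ ∂ - c` in every entry of a matrix of polynomials. -/
noncomputable def shiftP (n : ℕ) (c : ℂ) (M : Matrix (Fin n) (Fin n) (Polynomial ℂ)) :
    Matrix (Fin n) (Fin n) (Polynomial ℂ) :=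
  M.map fun f => f.comp (Polynomial.X - Polynomial.C c)

/-- The associative product of `𝒟_s^{(n)}`: since `∂x = x(∂+s)`, one has
`(A(∂)x^{l1})(B(∂)x^{l2}) = A(∂)·B(∂ - l1·s)·x^{l1+l2}`. -/
noncomputable def Dmul (n : ℕ) (s : ℂ) (F G : DiffT n) : DiffT n :=
  F.sum fun l1 A => G.sum fun l2 B =>
    Finsupp.single (l1 + l2) (A * shiftP n ((l1 : ℂ) * s) B)

/-- The commutator Lie bracket on `𝒟_s^{(n)}`. -/
noncomputable def DbrD (n : ℕ) (s : ℂ) (F G : DiffT n) : DiffT n :=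
  Dmul n s F G - Dmul n s G F

/-- The bilinear form `φ` of [BKLY, (2.3)], given on basis elements by
`φ(M1 ⊗ f1(∂)x^{l1}, M2 ⊗ f2(∂)x^{l2}) = tr(M1M2)·Σ_{a=0}^{l1−1} f1(as)f2((a−l1)s)` if
`l1 = −l2 > 0`, `= −tr(M1M2)·Σ_{a=0}^{−l1−1} f2(as)f1((a+l1)s)` if `l1 = −l2 < 0`, else `0`. -/
noncomputable def phiD (n : ℕ) (s : ℂ) (F G : DiffT n) : ℂ :=
  F.sum fun l A =>
    if 0 < l then
      ∑ a ∈ Finset.range l.toNat,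
        (A.map (Polynomial.eval ((a : ℂ) * s)) *
          (G (-l)).map (Polynomial.eval (((a : ℂ) - (l : ℂ)) * s))).trace
    else if l < 0 then
      - ∑ a ∈ Finset.range (-l).toNat,
        ((G (-l)).map (Polynomial.eval ((a : ℂ) * s)) *
          A.map (Polynomial.eval (((a : ℂ) + (l : ℂ)) * s))).trace
    else 0

/-!
Read a matrix of polynomials `A(∂)` through its values `A(a s)`, `a ∈ ℤ`. Then
`φ(A x^l, C x^{-l}) = ∑_a w_l(a) tr(A(a s) C((a - l) s))` with the window
`w_l = 1_{[0,l)} - 1_{[l,0)}`, i.e. `w_l(a) = H(a) - H(a - l)` for the Heaviside step `H`.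
On monomials `A x^p, B x^q, C x^r` with `p + q + r = 0` the cocycle identity expands into six
sums of triple traces; cyclicity of the trace and the shifts `a ↦ a + p`, `a ↦ a + q` sort them
into two groups, each vanishing because the windows telescope:
`w_{p+q}(a) + w_{q+r}(a - p) + w_{r+p}(a - p - q) = 0`. Bilinearity does the rest.
-/

open Function

section Window

variable {M : Type*} [AddCommGroup M]

def heaviside (a : ℤ) : ℤ := if 0 ≤ a then 1 else 0

def window (l a : ℤ) : ℤ := heaviside a - heaviside (a - l)

lemma support_window_subset (l : ℤ) : support (window l) ⊆ Set.Ico (min l 0) (max l 0) := by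
  intro a ha
  simp only [mem_support, window, heaviside] at ha
  simp only [Set.mem_Ico]
  split_ifs at ha <;> omega

lemma hasFiniteSupport_window_smul (l c : ℤ) (f : ℤ → M) :
    HasFiniteSupport fun a => window l (a - c) • f a := by
  refine (Set.finite_Ico (min l 0 + c) (max l 0 + c)).subset fun a ha => ?_
  have := support_window_subset l (support_smul_subset_left (fun a => window l (a - c)) f ha)
  simp only [Set.mem_Ico] at this ⊢
  omega

lemma finsum_window_smul_comp_add (l c : ℤ) (f : ℤ → M) :
    ∑ᶠ a, window l a • f (a + c) = ∑ᶠ a, window l (a - c) • f a := by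
  symm
  rw [← finsum_comp_equiv (Equiv.addRight c)]
  simp only [Equiv.coe_addRight, add_sub_cancel_right]

lemma window_cocycle {p q r : ℤ} (h : p + q + r = 0) (a : ℤ) :
    window (p + q) a + window (q + r) (a - p) + window (r + p) (a - (p + q)) = 0 := by
  simp only [window, heaviside]
  split_ifs <;> omega

lemma finsum_window_cocycle {p q r : ℤ} (h : p + q + r = 0) (f : ℤ → M) :
    ∑ᶠ a, window (p + q) a • f a + ∑ᶠ a, window (q + r) a • f (a + p)
      + ∑ᶠ a, window (r + p) a • f (a + p + q) = 0 := by
  have hfin := hasFiniteSupport_window_smul (p + q) 0 f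
  simp only [sub_zero] at hfin
  simp only [add_assoc _ p q, finsum_window_smul_comp_add]
  have hfin' : HasFiniteSupport fun a => window (p + q) a • f a + window (q + r) (a - p) • f a :=
    hfin.add (hasFiniteSupport_window_smul _ _ f)
  rw [← finsum_add_distrib hfin (hasFiniteSupport_window_smul _ _ f),
    ← finsum_add_distrib hfin' (hasFiniteSupport_window_smul _ _ f)]
  simp only [← add_smul, window_cocycle h, zero_smul, finsum_zero]

lemma finsum_window_neg_smul_comp_add (l : ℤ) (f : ℤ → M) :
    ∑ᶠ a, window (-l) a • f (a + l) = -∑ᶠ a, window l a • f a := by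
  rw [finsum_window_smul_comp_add, ← finsum_neg_distrib]
  congr! 2 with a
  rw [← neg_smul, window, window, sub_neg_eq_add, sub_add_cancel, neg_sub]

lemma finsum_window_smul_eq_ite (l : ℤ) (f : ℤ → M) :
    ∑ᶠ a, window l a • f a =
      if 0 < l then ∑ a ∈ Finset.range l.toNat, f a
      else if l < 0 then -∑ a ∈ Finset.range (-l).toNat, f (a + l) else 0 := by
  have hsupp : support (fun a => window l a • f a) ⊆ ↑(Finset.Ico (min l 0) (max l 0)) := by
    rw [Finset.coe_Ico]
    exact (support_smul_subset_left (window l) f).trans (support_window_subset l)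
  rw [finsum_eq_sum_of_support_subset _ hsupp]
  rcases lt_trichotomy l 0 with hl | rfl | hl
  · rw [if_neg hl.not_gt, if_pos hl, min_eq_left hl.le, max_eq_right hl.le, Int.Ico_eq_finset_map,
      Finset.sum_map, ← Finset.sum_neg_distrib]
    refine Finset.sum_congr (by simp) fun k hk => ?_
    rw [Finset.mem_range] at hk
    have : window l (l + k) = -1 := by simp only [window, heaviside]; split_ifs <;> omega
    simp [this, add_comm]
  · simp
  · rw [if_pos hl, min_eq_right hl.le, max_eq_left hl.le, Int.Ico_eq_finset_map, Finset.sum_map]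
    refine Finset.sum_congr (by simp) fun k hk => ?_
    rw [Finset.mem_range] at hk
    have : window l k = 1 := by simp only [window, heaviside]; split_ifs <;> omega
    simp [this]

end Window

section TracePairing

variable {m R : Type*} [Fintype m] [CommRing R]

noncomputable def tracePairing (l : ℤ) (X Y : ℤ → Matrix m m R) : R :=
  ∑ᶠ a, window l a • (X a * Y (a - l)).trace

-- `[X x^p, Y x^q] = (X(∂) Y(∂ - p s) - Y(∂) X(∂ - q s)) x^{p+q}`, read at `∂ = a s`.
def twistedBracket (p q : ℤ) (X Y : ℤ → Matrix m m R) : ℤ → Matrix m m R :=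
  fun a => X a * Y (a - p) - Y a * X (a - q)

lemma tracePairing_add_left (l : ℤ) (X X' Y : ℤ → Matrix m m R) :
    tracePairing l (X + X') Y = tracePairing l X Y + tracePairing l X' Y := by
  have hfin (Z : ℤ → Matrix m m R) := by
    simpa only [sub_zero] using hasFiniteSupport_window_smul l 0 fun a => (Z a * Y (a - l)).trace
  rw [tracePairing, tracePairing, tracePairing, ← finsum_add_distrib (hfin X) (hfin X')]
  simp only [Pi.add_apply, Matrix.add_mul, Matrix.trace_add, smul_add]

lemma tracePairing_add_right (l : ℤ) (X Y Y' : ℤ → Matrix m m R) :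
    tracePairing l X (Y + Y') = tracePairing l X Y + tracePairing l X Y' := by
  have hfin (Z : ℤ → Matrix m m R) := by
    simpa only [sub_zero] using hasFiniteSupport_window_smul l 0 fun a => (X a * Z (a - l)).trace
  rw [tracePairing, tracePairing, tracePairing, ← finsum_add_distrib (hfin Y) (hfin Y')]
  simp only [Pi.add_apply, Matrix.mul_add, Matrix.trace_add, smul_add]

lemma tracePairing_zero_right (l : ℤ) (X : ℤ → Matrix m m R) : tracePairing l X 0 = 0 := by
  simp [tracePairing]

lemma tracePairing_neg_swap (l : ℤ) (X Y : ℤ → Matrix m m R) :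
    tracePairing (-l) Y X = -tracePairing l X Y := by
  rw [tracePairing, tracePairing, ← finsum_window_neg_smul_comp_add]
  simp only [sub_neg_eq_add, add_sub_cancel_right, Matrix.trace_mul_comm (Y _)]

lemma tracePairing_twistedBracket (l p q : ℤ) (X Y Z : ℤ → Matrix m m R) :
    tracePairing l (twistedBracket p q X Y) Z =
      ∑ᶠ a, window l a • (X a * Y (a - p) * Z (a - l)).trace
        - ∑ᶠ a, window l a • (Y a * X (a - q) * Z (a - l)).trace := by
  rw [tracePairing, ← finsum_sub_distrib]
  · simp only [twistedBracket, Matrix.sub_mul, Matrix.trace_sub, smul_sub]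
  all_goals simpa only [sub_zero] using hasFiniteSupport_window_smul l 0 _

theorem tracePairing_twistedBracket_cyclic {p q r : ℤ} (h : p + q + r = 0)
    (X Y Z : ℤ → Matrix m m R) :
    tracePairing (p + q) (twistedBracket p q X Y) Z
      + tracePairing (q + r) (twistedBracket q r Y Z) X
      + tracePairing (r + p) (twistedBracket r p Z X) Y = 0 := by
  set f : ℤ → R := fun a => (X a * Y (a - p) * Z (a - p - q)).trace
  set g : ℤ → R := fun a => (Y a * X (a - q) * Z (a - q - p)).trace
  have hfg := finsum_window_cocycle h f
  -- the `Y X Z` traces telescope like the `X Y Z` ones, with `p` and `q` exchanged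
  have hgf := finsum_window_cocycle (p := q) (q := p) (show q + p + r = 0 by omega) g
  rw [add_comm q p, add_comm p r, add_comm r q] at hgf
  rw [tracePairing_twistedBracket, tracePairing_twistedBracket, tracePairing_twistedBracket]
  have hf₁ (a : ℤ) : (X a * Y (a - p) * Z (a - (p + q))).trace = f a := by
    congrm (X a * Y (a - p) * Z ?_).trace; omega
  have hg₁ (a : ℤ) : (Y a * X (a - q) * Z (a - (p + q))).trace = g a := by
    congrm (Y a * X (a - q) * Z ?_).trace; omega
  have hf₂ (a : ℤ) : (Y a * Z (a - q) * X (a - (q + r))).trace = f (a + p) := by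
    rw [Matrix.trace_mul_cycle]
    congrm (X ?_ * Y ?_ * Z ?_).trace <;> omega
  have hg₂ (a : ℤ) : (Z a * Y (a - r) * X (a - (q + r))).trace = g (a + q + p) := by
    rw [Matrix.trace_mul_cycle, Matrix.trace_mul_cycle]
    congrm (Y ?_ * X ?_ * Z ?_).trace <;> omega
  have hf₃ (a : ℤ) : (Z a * X (a - r) * Y (a - (r + p))).trace = f (a + p + q) := by
    rw [Matrix.trace_mul_cycle, Matrix.trace_mul_cycle]
    congrm (X ?_ * Y ?_ * Z ?_).trace <;> omega
  have hg₃ (a : ℤ) : (X a * Z (a - p) * Y (a - (r + p))).trace = g (a + q) := by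
    rw [Matrix.trace_mul_cycle]
    congrm (Y ?_ * X ?_ * Z ?_).trace <;> omega
  simp only [hf₁, hg₁, hf₂, hg₂, hf₃, hg₃]
  linear_combination hfg - hgf

end TracePairing

section Symbol

variable {m R : Type*} [CommRing R]

def symbol (s : R) (A : Matrix m m R[X]) : ℤ → Matrix m m R :=
  fun a => A.map (eval ((a : R) * s))

lemma symbol_add (s : R) (A B : Matrix m m R[X]) :
    symbol s (A + B) = symbol s A + symbol s B := by
  ext a : 1
  exact Matrix.map_add _ (fun _ _ => eval_add) A B

lemma symbol_sub (s : R) (A B : Matrix m m R[X]) :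
    symbol s (A - B) = symbol s A - symbol s B := by
  ext a : 1
  exact Matrix.map_sub _ (fun _ _ => eval_sub ..) A B

@[simp]
lemma symbol_zero (s : R) : symbol s (0 : Matrix m m R[X]) = 0 := by
  ext a : 1
  exact Matrix.map_zero _ (eval_zero ..)

lemma symbol_mul [Fintype m] (s : R) (A B : Matrix m m R[X]) (a : ℤ) :
    symbol s (A * B) a = symbol s A a * symbol s B a :=
  Matrix.map_mul (f := evalRingHom _)

end Symbol

lemma symbol_shiftP (n : ℕ) (s : ℂ) (p a : ℤ) (B : Matrix (Fin n) (Fin n) ℂ[X]) :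
    symbol s (shiftP n (p * s) B) a = symbol s B (a - p) := by
  ext i j
  simp [symbol, shiftP, eval_comp, sub_mul]

lemma phiD_eq_sum_tracePairing (n : ℕ) (s : ℂ) (F G : DiffT n) :
    phiD n s F G = F.sum fun l A => tracePairing l (symbol s A) (symbol s (G (-l))) := by
  refine Finsupp.sum_congr fun l _ => ?_
  rw [tracePairing, finsum_window_smul_eq_ite]
  simp only [symbol, Int.cast_natCast, Int.cast_add, Int.cast_sub, add_sub_cancel_right]
  congr! 4 with a
  rw [Matrix.trace_mul_comm]

section Bilinearity

variable (n : ℕ) (s : ℂ)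

lemma phiD_add_left (F F' G : DiffT n) :
    phiD n s (F + F') G = phiD n s F G + phiD n s F' G := by
  simp only [phiD_eq_sum_tracePairing]
  refine Finsupp.sum_add_index' (fun _ => by simp [tracePairing]) fun _ _ _ => ?_
  rw [symbol_add, tracePairing_add_left]

lemma phiD_add_right (F G G' : DiffT n) :
    phiD n s F (G + G') = phiD n s F G + phiD n s F G' := by
  simp only [phiD_eq_sum_tracePairing, ← Finsupp.sum_add, Finsupp.add_apply, symbol_add,
    tracePairing_add_right]

lemma phiD_zero_left (G : DiffT n) : phiD n s 0 G = 0 := by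
  simp [phiD_eq_sum_tracePairing]

lemma phiD_zero_right (F : DiffT n) : phiD n s F 0 = 0 := by
  simp [phiD_eq_sum_tracePairing, tracePairing_zero_right]

lemma shiftP_add (c : ℂ) (A B : Matrix (Fin n) (Fin n) ℂ[X]) :
    shiftP n c (A + B) = shiftP n c A + shiftP n c B :=
  Matrix.map_add _ (fun _ _ => add_comp) A B

lemma Dmul_add_left (F F' G : DiffT n) :
    Dmul n s (F + F') G = Dmul n s F G + Dmul n s F' G :=
  Finsupp.sum_add_index' (fun _ => by simp) fun _ _ _ => by
    simp only [add_mul, Finsupp.single_add, Finsupp.sum_add]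

lemma Dmul_add_right (F G G' : DiffT n) :
    Dmul n s F (G + G') = Dmul n s F G + Dmul n s F G' := by
  simp only [Dmul, ← Finsupp.sum_add]
  refine Finsupp.sum_congr fun _ _ => Finsupp.sum_add_index' (fun _ => by simp [shiftP]) ?_
  intro _ _ _
  rw [shiftP_add, mul_add, Finsupp.single_add]

lemma Dmul_zero_left (G : DiffT n) : Dmul n s 0 G = 0 := by
  simp [Dmul]

lemma Dmul_zero_right (F : DiffT n) : Dmul n s F 0 = 0 := by
  simp [Dmul]

lemma DbrD_add_left (F F' G : DiffT n) :
    DbrD n s (F + F') G = DbrD n s F G + DbrD n s F' G := by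
  simp only [DbrD, Dmul_add_left, Dmul_add_right]
  abel

lemma DbrD_add_right (F G G' : DiffT n) :
    DbrD n s F (G + G') = DbrD n s F G + DbrD n s F G' := by
  simp only [DbrD, Dmul_add_left, Dmul_add_right]
  abel

lemma DbrD_zero_left (G : DiffT n) : DbrD n s 0 G = 0 := by
  simp [DbrD, Dmul_zero_left, Dmul_zero_right]

lemma DbrD_zero_right (F : DiffT n) : DbrD n s F 0 = 0 := by
  simp [DbrD, Dmul_zero_left, Dmul_zero_right]

end Bilinearity

section Monomials

variable (n : ℕ) (s : ℂ)

lemma phiD_single_single (l k : ℤ) (A C : Matrix (Fin n) (Fin n) ℂ[X]) :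
    phiD n s (Finsupp.single l A) (Finsupp.single k C) =
      if k = -l then tracePairing l (symbol s A) (symbol s C) else 0 := by
  rw [phiD_eq_sum_tracePairing, Finsupp.sum_single_index (by simp [tracePairing]),
    Finsupp.single_apply]
  split_ifs <;> simp [tracePairing_zero_right]

lemma DbrD_single_single (p q : ℤ) (A B : Matrix (Fin n) (Fin n) ℂ[X]) :
    DbrD n s (Finsupp.single p A) (Finsupp.single q B) =
      Finsupp.single (p + q) (A * shiftP n (p * s) B - B * shiftP n (q * s) A) := by
  simp [DbrD, Dmul, shiftP, add_comm q p]

lemma symbol_bracket (p q : ℤ) (A B : Matrix (Fin n) (Fin n) ℂ[X]) :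
    symbol s (A * shiftP n (p * s) B - B * shiftP n (q * s) A) =
      twistedBracket p q (symbol s A) (symbol s B) := by
  ext a : 1
  simp only [symbol_sub, Pi.sub_apply, symbol_mul, symbol_shiftP, twistedBracket]

lemma phiD_single_swap (l k : ℤ) (A C : Matrix (Fin n) (Fin n) ℂ[X]) :
    phiD n s (Finsupp.single l A) (Finsupp.single k C) =
      -phiD n s (Finsupp.single k C) (Finsupp.single l A) := by
  rw [phiD_single_single, phiD_single_single]
  by_cases h : k = -l
  · subst h
    rw [if_pos rfl, if_pos (neg_neg l).symm, tracePairing_neg_swap, neg_neg]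
  · rw [if_neg h, if_neg (by omega), neg_zero]

lemma phiD_DbrD_single_cyclic (p q r : ℤ) (A B C : Matrix (Fin n) (Fin n) ℂ[X]) :
    phiD n s (DbrD n s (Finsupp.single p A) (Finsupp.single q B)) (Finsupp.single r C)
      + phiD n s (DbrD n s (Finsupp.single q B) (Finsupp.single r C)) (Finsupp.single p A)
      + phiD n s (DbrD n s (Finsupp.single r C) (Finsupp.single p A)) (Finsupp.single q B)
      = 0 := by
  simp only [DbrD_single_single, phiD_single_single, symbol_bracket]
  by_cases h : p + q + r = 0
  · rw [if_pos (by omega), if_pos (by omega), if_pos (by omega)]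
    exact tracePairing_twistedBracket_cyclic h _ _ _
  · rw [if_neg (by omega), if_neg (by omega), if_neg (by omega), add_zero, add_zero]

end Monomials

theorem phiD_swap (n : ℕ) (s : ℂ) (F G : DiffT n) : phiD n s F G = -phiD n s G F := by
  induction F using Finsupp.induction_linear with
  | zero => rw [phiD_zero_left, phiD_zero_right, neg_zero]
  | add F F' hF hF' => rw [phiD_add_left, phiD_add_right, hF, hF', neg_add]
  | single l A =>
    induction G using Finsupp.induction_linear with
    | zero => rw [phiD_zero_left, phiD_zero_right, neg_zero]
    | add G G' hG hG' => rw [phiD_add_left, phiD_add_right, hG, hG', neg_add]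
    | single k C => exact phiD_single_swap n s l k A C

theorem phiD_DbrD_cyclic (n : ℕ) (s : ℂ) (F G H : DiffT n) :
    phiD n s (DbrD n s F G) H + phiD n s (DbrD n s G H) F + phiD n s (DbrD n s H F) G = 0 := by
  induction F using Finsupp.induction_linear with
  | zero => simp only [DbrD_zero_left, DbrD_zero_right, phiD_zero_left, phiD_zero_right, add_zero]
  | add F F' hF hF' =>
    simp only [DbrD_add_left, DbrD_add_right, phiD_add_left, phiD_add_right]
    linear_combination hF + hF'
  | single p A =>
    induction G using Finsupp.induction_linear with
    | zero => simp only [DbrD_zero_left, DbrD_zero_right, phiD_zero_left, phiD_zero_right, add_zero]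
    | add G G' hG hG' =>
      simp only [DbrD_add_left, DbrD_add_right, phiD_add_left, phiD_add_right]
      linear_combination hG + hG'
    | single q B =>
      induction H using Finsupp.induction_linear with
      | zero => simp only [DbrD_zero_left, DbrD_zero_right, phiD_zero_left, phiD_zero_right, add_zero]
      | add H H' hH hH' =>
        simp only [DbrD_add_left, DbrD_add_right, phiD_add_left, phiD_add_right]
        linear_combination hH + hH'
      | single r C => exact phiD_DbrD_single_cyclic n s p q r A B C

/-- `φ` is a Lie algebra 2-cocycle on `𝒟_s^{(n)}`: it is antisymmetric and satisfies
the cocycle identity `φ([X,Y],W) + φ([Y,W],X) + φ([W,X],Y) = 0`. -/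
theorem stmt5 (n : ℕ) (s : ℂ) :
    (∀ F G : DiffT n, phiD n s F G = - phiD n s G F) ∧
    (∀ F G H : DiffT n,
      phiD n s (DbrD n s F G) H + phiD n s (DbrD n s G H) F + phiD n s (DbrD n s H F) G = 0) :=
  ⟨phiD_swap n s, phiD_DbrD_cyclic n s⟩
end

section
/- For n ≥ 3, d ∈ ℂ× not a root of unity, and k ≠ 0, the linear system Σ_{i∈ℤ/nℤ} b(i,j)·c_i = 0 for all j ∈ {1,…,n−1} together with c_0 = 1, where b(i,j) = a_{i,j}·d^{−k·m_{i,j}} with a_{i,j} = 2δ_{i,j} − δ_{i,j+1} − δ_{i,j−1} and m_{i,j} = δ_{i,j+1} − δ_{i,j−1} (indices mod n), has a unique solution (c_i), and for this solution the diagonal matrix c_0·(E_{n,n} − d^{nk}E_{1,1}) + Σ_{i=1}^{n−1} c_i·d^{(n−i)k}·(E_{i,i} − E_{i+1,i+1}) equals ((1 − d^{nk})/n)·I_n, the scalar matrix with entry (1 − d^{nk})/n. -/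
open Matrix

/-- `m_{i,j} = δ_{i,j+1} − δ_{i,j−1}` (indices mod `n`). -/
def mExp (n : ℕ) (i j : ZMod n) : ℤ :=
  (if i = j + 1 then 1 else 0) - (if i = j - 1 then 1 else 0)

/-- `a_{i,j} = 2δ_{i,j} − δ_{i,j+1} − δ_{i,j−1}` (indices mod `n`). -/
def aCartan (n : ℕ) (i j : ZMod n) : ℂ :=
  2 * (if i = j then 1 else 0) - (if i = j + 1 then 1 else 0) - (if i = j - 1 then 1 else 0)

/-!
Write `q = d ^ k`. For `j ≠ 0` the `j`-th equation reads `c (j + 1) = 2 q c j - q ^ 2 c (j - 1)`,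
a linear recurrence whose characteristic polynomial has the double root `q`. Reading the indices
as `0, 1, …, n` with `c n = c 0 = 1`, every solution is `c m = (1 + m β) q ^ m`, and the equation
at `j = n - 1`, i.e. `c n = 1`, forces `(1 + n β) q ^ n = 1`, which determines `β`.
In the matrix, the coefficient of `E_{i,i} - E_{i+1,i+1}` becomes `(1 + i β) q ^ n`, affine in `i`,
so summation by parts leaves `∑ i, β q ^ n E_{i,i} = ((1 - q ^ n) / n) I_n`.
-/

theorem Finset.sum_range_smul_sub_succ_eq {R M : Type*} [Ring R] [AddCommGroup M] [Module R M]
    (g : ℕ → R) (E : ℕ → M) (N : ℕ) :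
    ∑ i ∈ Finset.range N, g (i + 1) • (E i - E (i + 1)) + g (N + 1) • E N - g 0 • E 0 =
      ∑ i ∈ Finset.range (N + 1), (g (i + 1) - g i) • E i := by
  induction N with
  | zero => simp [sub_smul]
  | succ N ih =>
    rw [Finset.sum_range_succ, Finset.sum_range_succ _ (N + 1), ← ih]
    simp only [smul_sub, sub_smul]
    abel

theorem eq_mul_pow_of_double_root_recurrence {R : Type*} [CommRing R] {q a b : R} {s : ℕ → R}
    {N : ℕ} (h0 : s 0 = a) (h1 : s 1 = (a + b) * q)
    (hrec : ∀ m, m + 2 ≤ N → s (m + 2) = 2 * q * s (m + 1) - q ^ 2 * s m) :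
    ∀ m ≤ N, s m = (a + m * b) * q ^ m := by
  refine Nat.twoStepInduction (by simp [h0]) (by simp [h1]) fun m ih ih' hm => ?_
  rw [hrec m hm, ih (by omega), ih' (by omega)]
  push_cast
  ring

theorem ZMod.forall_ne_zero_iff_natCast_succ {n : ℕ} [NeZero n] {P : ZMod n → Prop} :
    (∀ j : ZMod n, j ≠ 0 → P j) ↔ ∀ m, m + 2 ≤ n → P ((m + 1 : ℕ) : ZMod n) := by
  refine ⟨fun h m hm => h _ ?_, fun h j hj => ?_⟩
  · rw [Ne, ZMod.natCast_eq_zero_iff]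
    exact fun hdvd => absurd (Nat.le_of_dvd m.succ_pos hdvd) (by omega)
  · have hval : j.val ≠ 0 := (ZMod.val_eq_zero j).not.mpr hj
    have := h (j.val - 1) (by have := j.val_lt; omega)
    rwa [Nat.sub_add_cancel (Nat.one_le_iff_ne_zero.mpr hval), ZMod.natCast_zmod_val] at this

-- The paper's `E_{m+1,m+1}` (indices start at `0` here); it is `0` for `m ≥ n`.
def diagUnit (n m : ℕ) : Matrix (Fin n) (Fin n) ℂ :=
  diagonal fun p => if (p : ℕ) = m then 1 else 0

theorem single_eq_diagUnit {n m : ℕ} (h : m < n) :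
    single (⟨m, h⟩ : Fin n) ⟨m, h⟩ (1 : ℂ) = diagUnit n m := by
  ext p p'
  simp only [single_apply, diagUnit, diagonal_apply, Fin.ext_iff]
  split_ifs <;> grind

theorem sum_range_diagUnit (n : ℕ) : ∑ m ∈ Finset.range n, diagUnit n m = 1 := by
  ext p p'
  simp only [diagUnit, Matrix.sum_apply, diagonal_apply, one_apply]
  split_ifs <;> simp [p.isLt]

theorem sum_aCartan_mul_zpow_mExp {n : ℕ} [NeZero n] (h2 : (2 : ZMod n) ≠ 0) (d : ℂ) (k : ℤ)
    (c : ZMod n → ℂ) (j : ZMod n) :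
    ∑ i, aCartan n i j * d ^ (-k * mExp n i j) * c i =
      2 * c j - d ^ (-k) * c (j + 1) - d ^ k * c (j - 1) := by
  have h1 : (1 : ZMod n) ≠ 0 := fun h => h2 (by rw [← one_add_one_eq_two, h, add_zero])
  have hsucc : j + 1 ≠ j := by simpa using h1
  have hpred : j - 1 ≠ j := by simpa using h1
  have hsucc_pred : j + 1 ≠ j - 1 := fun h => h2 (by linear_combination h)
  have hterm : ∀ i, aCartan n i j * d ^ (-k * mExp n i j) * c i =
      (if i = j then 2 * c j else 0) - (if i = j + 1 then d ^ (-k) * c (j + 1) else 0) -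
        (if i = j - 1 then d ^ k * c (j - 1) else 0) := by
    intro i
    unfold aCartan mExp
    split_ifs <;> simp_all
  rw [Finset.sum_congr rfl fun i _ => hterm i, Finset.sum_sub_distrib, Finset.sum_sub_distrib,
    Finset.sum_ite_eq', Finset.sum_ite_eq', Finset.sum_ite_eq']
  simp

def IsCartanSolution (n : ℕ) [NeZero n] (d : ℂ) (k : ℤ) (c : ZMod n → ℂ) : Prop :=
  c 0 = 1 ∧
    ∀ j : ZMod n, j ≠ 0 → ∑ i : ZMod n, aCartan n i j * d ^ (-k * mExp n i j) * c i = 0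

theorem isCartanSolution_iff_recurrence {n : ℕ} [NeZero n] (h2 : (2 : ZMod n) ≠ 0) {d : ℂ}
    (hd : d ≠ 0) (k : ℤ) (c : ZMod n → ℂ) :
    IsCartanSolution n d k c ↔ c 0 = 1 ∧ ∀ m, m + 2 ≤ n →
      c ((m + 2 : ℕ) : ZMod n) =
        2 * d ^ k * c ((m + 1 : ℕ) : ZMod n) - (d ^ k) ^ 2 * c (m : ℕ) := by
  have hq : d ^ k ≠ 0 := zpow_ne_zero k hd
  unfold IsCartanSolution
  rw [ZMod.forall_ne_zero_iff_natCast_succ]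
  refine and_congr_right fun _ => forall₂_congr fun m _ => ?_
  rw [sum_aCartan_mul_zpow_mExp h2, _root_.zpow_neg,
    show ((m + 1 : ℕ) : ZMod n) + 1 = (m + 2 : ℕ) by push_cast; ring,
    show ((m + 1 : ℕ) : ZMod n) - 1 = m by push_cast; ring]
  constructor <;> intro h
  · field_simp at h
    linear_combination -h
  · rw [h]
    field_simp
    ring

-- `(1 + m β) q ^ m` with `β` chosen so that `(1 + n β) q ^ n = 1`.
noncomputable def cartanSol (n : ℕ) (q : ℂ) (m : ℕ) : ℂ :=
  (1 + m * (((q ^ n)⁻¹ - 1) / n)) * q ^ m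

theorem cartanSol_self {n : ℕ} (hn : n ≠ 0) {q : ℂ} (hq : q ≠ 0) : cartanSol n q n = 1 := by
  have hn' : (n : ℂ) ≠ 0 := Nat.cast_ne_zero.mpr hn
  rw [cartanSol, mul_div_cancel₀ _ hn', add_sub_cancel, inv_mul_cancel₀ (pow_ne_zero n hq)]

theorem isCartanSolution_iff {n : ℕ} [NeZero n] (h2 : (2 : ZMod n) ≠ 0) {d : ℂ} (hd : d ≠ 0)
    (k : ℤ) (c : ZMod n → ℂ) :
    IsCartanSolution n d k c ↔ ∀ m ≤ n, c (m : ℕ) = cartanSol n (d ^ k) m := by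
  rw [isCartanSolution_iff_recurrence h2 hd]
  set q := d ^ k
  have hq : q ≠ 0 := zpow_ne_zero k hd
  have hn0 : (n : ℂ) ≠ 0 := Nat.cast_ne_zero.mpr (NeZero.ne n)
  constructor
  · rintro ⟨h0, hrec⟩
    have hc := eq_mul_pow_of_double_root_recurrence (s := fun m : ℕ => c m) (a := 1)
      (b := q⁻¹ * c 1 - 1) (by simpa using h0)
      (by rw [add_sub_cancel, mul_comm, mul_inv_cancel_left₀ hq, Nat.cast_one]) hrec
    have hwrap : (1 + n * (q⁻¹ * c 1 - 1)) * q ^ n = 1 := by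
      rw [← hc n le_rfl, ZMod.natCast_self, h0]
    have hb : q⁻¹ * c 1 - 1 = ((q ^ n)⁻¹ - 1) / n := by
      rw [eq_div_iff hn0, eq_sub_iff_add_eq, ← eq_inv_of_mul_eq_one_left hwrap]
      ring
    intro m hm
    rw [hc m hm, hb, cartanSol]
  · intro hc
    refine ⟨by simpa [cartanSol] using hc 0 (Nat.zero_le n), fun m hm => ?_⟩
    rw [hc _ hm, hc _ (by omega), hc _ (by omega), cartanSol, cartanSol, cartanSol]
    push_cast
    ring

theorem isCartanSolution_cartanSol_val {n : ℕ} [NeZero n] (h2 : (2 : ZMod n) ≠ 0) {d : ℂ}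
    (hd : d ≠ 0) (k : ℤ) : IsCartanSolution n d k fun i => cartanSol n (d ^ k) i.val := by
  refine (isCartanSolution_iff h2 hd k _).mpr fun m hm => ?_
  rcases hm.lt_or_eq with hlt | rfl
  · rw [ZMod.val_cast_of_lt hlt]
  · rw [ZMod.natCast_self, ZMod.val_zero, cartanSol_self (NeZero.ne m) (zpow_ne_zero k hd)]
    simp [cartanSol]

theorem sum_smul_diagUnit_sub_succ_eq {n : ℕ} [NeZero n] (g : ℕ → ℂ) (r : ℂ)
    (hg : ∀ m, g (m + 1) - g m = r) :
    ∑ i ∈ Finset.range (n - 1), g (i + 1) • (diagUnit n i - diagUnit n (i + 1)) +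
        g n • diagUnit n (n - 1) - g 0 • diagUnit n 0 = r • 1 := by
  have h := Finset.sum_range_smul_sub_succ_eq g (diagUnit n) (n - 1)
  rw [Nat.sub_add_cancel NeZero.one_le] at h
  rw [h]
  simp only [hg, ← Finset.smul_sum, sum_range_diagUnit]

theorem cartan_diagonal_sum_eq {n : ℕ} [NeZero n] {d : ℂ} (hd : d ≠ 0) (k : ℤ)
    (c : ZMod n → ℂ) (hc : ∀ m ≤ n, c (m : ℕ) = cartanSol n (d ^ k) m) :
    c 0 • (diagUnit n (n - 1) - d ^ ((n : ℤ) * k) • diagUnit n 0) +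
        ∑ i : Fin (n - 1), c (((i : ℕ) + 1 : ℕ) : ZMod n) •
          (d ^ (((n : ℤ) - ((i : ℕ) + 1)) * k) • (diagUnit n i - diagUnit n (i + 1))) =
        ((1 - d ^ ((n : ℤ) * k)) / (n : ℂ)) • (1 : Matrix (Fin n) (Fin n) ℂ) := by
  set q := d ^ k
  have hq : q ≠ 0 := zpow_ne_zero k hd
  have hn0 : (n : ℂ) ≠ 0 := Nat.cast_ne_zero.mpr (NeZero.ne n)
  set g : ℕ → ℂ := fun m => (1 + m * (((q ^ n)⁻¹ - 1) / n)) * q ^ n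
  have hqn : d ^ ((n : ℤ) * k) = q ^ n := by rw [mul_comm, _root_.zpow_mul, zpow_natCast]
  have hcoef : ∀ i : Fin (n - 1),
      c (((i : ℕ) + 1 : ℕ) : ZMod n) * d ^ (((n : ℤ) - ((i : ℕ) + 1)) * k) = g (i + 1) := by
    intro i
    rw [hc _ (by omega), cartanSol, mul_comm _ k, _root_.zpow_mul, mul_assoc,
      ← zpow_natCast q (i + 1), ← zpow_add₀ hq]
    push_cast
    rw [add_sub_cancel, zpow_natCast]
    simp only [g, Nat.cast_add, Nat.cast_one]
  have hc0 : c 0 = 1 := by simpa [cartanSol] using hc 0 (Nat.zero_le n)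
  have hg0 : g 0 = q ^ n := by simp [g]
  have hg_self : g n = 1 := by
    simp only [g]
    rw [mul_div_cancel₀ _ hn0, add_sub_cancel, inv_mul_cancel₀ (pow_ne_zero n hq)]
  have hg_succ : ∀ m, g (m + 1) - g m = (1 - q ^ n) / n := by
    intro m
    simp only [g]
    push_cast
    field_simp
    ring
  simp only [smul_smul, hcoef, hc0, one_smul, hqn]
  rw [Fin.sum_univ_eq_sum_range (fun i => g (i + 1) • (diagUnit n i - diagUnit n (i + 1))),
    ← sum_smul_diagUnit_sub_succ_eq g _ hg_succ, hg_self, hg0, one_smul]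
  abel

/-- For `n ≥ 3`, `d` not a root of unity and `k ≠ 0`, the system
`Σ_i a_{i,j}d^{−k·m_{i,j}}·c_i = 0` (for all `j ≠ 0`), `c_0 = 1` has a unique solution,
and for this solution `c_0·(E_{n,n} − d^{nk}E_{1,1}) + Σ_{i=1}^{n−1} c_i·d^{(n−i)k}·(E_{i,i} −
E_{i+1,i+1})` equals the scalar matrix `((1 − d^{nk})/n)·I_n`. -/
theorem stmt13 (n : ℕ) [NeZero n] (hn : 3 ≤ n) (d : ℂ) (hd : d ≠ 0) (k : ℤ) :
    (∃! c : ZMod n → ℂ, c 0 = 1 ∧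
      ∀ j : ZMod n, j ≠ 0 → ∑ i : ZMod n, aCartan n i j * d ^ (-k * mExp n i j) * c i = 0) ∧
    (∀ c : ZMod n → ℂ, (c 0 = 1 ∧
        ∀ j : ZMod n, j ≠ 0 → ∑ i : ZMod n, aCartan n i j * d ^ (-k * mExp n i j) * c i = 0) →
      c 0 • (Matrix.single (⟨n - 1, by omega⟩ : Fin n) (⟨n - 1, by omega⟩ : Fin n) (1 : ℂ) -
          d ^ ((n : ℤ) * k) • Matrix.single (⟨0, by omega⟩ : Fin n) (⟨0, by omega⟩ : Fin n) 1) +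
        ∑ i : Fin (n - 1),
          c (((i : ℕ) + 1 : ℕ) : ZMod n) •
            (d ^ (((n : ℤ) - ((i : ℕ) + 1)) * k) •
              (Matrix.single (⟨(i : ℕ), by have := i.isLt; omega⟩ : Fin n)
                  (⟨(i : ℕ), by have := i.isLt; omega⟩ : Fin n) (1 : ℂ) -
                Matrix.single (⟨(i : ℕ) + 1, by have := i.isLt; omega⟩ : Fin n)
                  (⟨(i : ℕ) + 1, by have := i.isLt; omega⟩ : Fin n) 1)) =
        ((1 - d ^ ((n : ℤ) * k)) / (n : ℂ)) • (1 : Matrix (Fin n) (Fin n) ℂ)) := by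
  have h2 : (2 : ZMod n) ≠ 0 := by
    rw [← Nat.cast_ofNat, Ne, ZMod.natCast_eq_zero_iff]
    exact fun hdvd => absurd (Nat.le_of_dvd two_pos hdvd) (by omega)
  have hsol := isCartanSolution_iff h2 hd k
  have huniq (c : ZMod n → ℂ) (hc : IsCartanSolution n d k c) (i : ZMod n) :
      c i = cartanSol n (d ^ k) i.val := by
    simpa only [ZMod.natCast_zmod_val] using (hsol c).mp hc i.val i.val_lt.le
  exact ⟨.intro (fun i => cartanSol n (d ^ k) i.val) (isCartanSolution_cartanSol_val h2 hd k)
      fun c hc => funext (huniq c hc),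
    fun c hc => by
      simpa only [single_eq_diagUnit] using cartan_diagonal_sum_eq hd k c ((hsol c).mp hc)⟩
end

section
/- For n ≥ 2 and any d ∈ ℂ×, the following assignment respects the commutator brackets of matrix units tensored with difference operators: setting ē_i = E_{i,i+1} ⊗ D^k·d^{(n−i)k} for 1 ≤ i ≤ n−1 and ē_0 = E_{n,1} ⊗ D^k Z, together with h̄_{i,k} = d^{(n−i)k}(E_{i,i} − E_{i+1,i+1}) ⊗ D^k for 1 ≤ i ≤ n−1, one has in M_n(𝔡_{d^n}): [h̄_{i,k}, d^{(n−j)l}E_{j,j+1} ⊗ D^l] = a_{i,j}·d^{−k·m_{i,j}}·d^{(n−j)(l+k)}·E_{j,j+1} ⊗ D^{l+k} for all i,j ∈ {1,…,n−1} and k,l ∈ ℤ, where a_{i,j} = 2δ_{i,j} − δ_{i,j+1} − δ_{i,j−1} and m_{i,j} = δ_{i,j+1} − δ_{i,j−1}. -/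
open Matrix

/-! Both arguments are pure powers of `D`, so the `d^n`-twist of the product never enters and the
bracket is `D^{k+l}` tensored with the matrix commutator `[E_{i,i} - E_{i+1,i+1}, E_{j,j+1}]`,
which is `a_{i,j} E_{j,j+1}` as in `sl_n`. It remains to match the scalars: when `a_{i,j} ≠ 0` we
have `|i - j| ≤ 1`, and then `m_{i,j} = i - j` is exactly the discrepancy between the exponents
`(n-i)k + (n-j)l` and `(n-j)(l+k)`. -/

attribute [local instance] LieRing.ofAssociativeRing

theorem dmul_single_single (n : ℕ) (t : ℂ) (p q : ℤ × ℤ) (A B : Matrix (Fin n) (Fin n) ℂ) :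
    dmul n t (Finsupp.single p A) (Finsupp.single q B) =
      Finsupp.single (p.1 + q.1, p.2 + q.2) (t ^ (-(p.2 * q.1)) • (A * B)) := by
  simp [dmul]

theorem dbr_single_zero_single_zero (n : ℕ) (t : ℂ) (k l : ℤ)
    (A B : Matrix (Fin n) (Fin n) ℂ) :
    dbr n t (Finsupp.single (k, 0) A) (Finsupp.single (l, 0) B) =
      Finsupp.single (k + l, 0) ⁅A, B⁆ := by
  rw [dbr, dmul_single_single, dmul_single_single, Ring.lie_def, Finsupp.single_sub]
  simp [add_comm l k]

theorem Matrix.lie_diagonal_single {ι R : Type*} [Fintype ι] [DecidableEq ι] [CommRing R]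
    (v : ι → R) (a b : ι) (x : R) :
    ⁅diagonal v, single a b x⁆ = (v a - v b) • single a b x := by
  ext i j
  simp only [Ring.lie_def, sub_apply, diagonal_mul, mul_diagonal, smul_apply, single_apply,
    smul_eq_mul]
  split_ifs with h
  · rw [h.1, h.2]; ring
  · simp

/-- The entries `a_{i,j}` and `m_{i,j}` of the statement; `j - 1` is truncated subtraction, which is
harmless for `1 ≤ j`. -/
def cartanA (i j : ℕ) : ℂ :=
  2 * (if i = j then 1 else 0) - (if i = j + 1 then 1 else 0) - (if i = j - 1 then 1 else 0)

def cartanM (i j : ℕ) : ℤ :=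
  (if i = j + 1 then 1 else 0) - (if i = j - 1 then 1 else 0)

theorem cartanM_eq_sub_of_cartanA_ne_zero {i j : ℕ} (hj : 1 ≤ j) (h : cartanA i j ≠ 0) :
    cartanM i j = i - j := by
  unfold cartanA at h
  unfold cartanM
  split_ifs at h ⊢ <;> first | omega | norm_num at h

theorem lie_coroot_single_eq_cartanA_smul {n i j : ℕ} (hi : 1 ≤ i) (hi' : i < n) (hj : 1 ≤ j)
    (hj' : j < n) :
    ⁅single (⟨i - 1, by omega⟩ : Fin n) (⟨i - 1, by omega⟩ : Fin n) (1 : ℂ) -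
        single (⟨i, hi'⟩ : Fin n) (⟨i, hi'⟩ : Fin n) 1,
      single (⟨j - 1, by omega⟩ : Fin n) (⟨j, hj'⟩ : Fin n) (1 : ℂ)⁆ =
      cartanA i j • single (⟨j - 1, by omega⟩ : Fin n) (⟨j, hj'⟩ : Fin n) (1 : ℂ) := by
  rw [← diagonal_single, ← diagonal_single, diagonal_sub, lie_diagonal_single]
  congr 1
  simp only [cartanA, Pi.single_apply, Fin.ext_iff]
  split_ifs <;> first | omega | norm_num

theorem zpow_mul_zpow_mul_cartanA {d : ℂ} (hd : d ≠ 0) (n : ℤ) {i j : ℕ} (hj : 1 ≤ j)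
    (k l : ℤ) :
    d ^ ((n - i) * k) * d ^ ((n - j) * l) * cartanA i j =
      cartanA i j * d ^ (-k * cartanM i j) * d ^ ((n - j) * (l + k)) := by
  by_cases h : cartanA i j = 0
  · simp [h]
  rw [cartanM_eq_sub_of_cartanA_ne_zero hj h]
  calc d ^ ((n - i) * k) * d ^ ((n - j) * l) * cartanA i j
      = cartanA i j * d ^ ((n - i) * k + (n - j) * l) := by rw [zpow_add₀ hd]; ring
    _ = cartanA i j * d ^ (-k * (i - j) + (n - j) * (l + k)) := by ring_nf
    _ = cartanA i j * d ^ (-k * (i - j)) * d ^ ((n - j) * (l + k)) := by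
      rw [zpow_add₀ hd]; ring

/-- In `M_n(𝔡_{d^n})`, with `h̄_{i,k} = d^{(n−i)k}(E_{i,i} − E_{i+1,i+1}) ⊗ D^k`, one has
`[h̄_{i,k}, d^{(n−j)l}E_{j,j+1} ⊗ D^l] = a_{i,j}·d^{−k·m_{i,j}}·d^{(n−j)(l+k)}·E_{j,j+1} ⊗ D^{l+k}`
for all `i,j ∈ {1,…,n−1}`, `k,l ∈ ℤ`, where `a_{i,j} = 2δ_{i,j} − δ_{i,j+1} − δ_{i,j−1}` and
`m_{i,j} = δ_{i,j+1} − δ_{i,j−1}` — relation (u5) of the classical limit. -/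
theorem stmt14 (n : ℕ) (d : ℂ) (hd : d ≠ 0)
    (i j : ℕ) (hi : 1 ≤ i) (hi' : i ≤ n - 1) (hj : 1 ≤ j) (hj' : j ≤ n - 1) (k l : ℤ) :
    dbr n (d ^ (n : ℤ))
      (Finsupp.single (k, 0) (d ^ (((n : ℤ) - i) * k) •
        (Matrix.single (⟨i - 1, by omega⟩ : Fin n) (⟨i - 1, by omega⟩ : Fin n) (1 : ℂ) -
          Matrix.single (⟨i, by omega⟩ : Fin n) (⟨i, by omega⟩ : Fin n) 1)))
      (Finsupp.single (l, 0) (d ^ (((n : ℤ) - j) * l) •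
        Matrix.single (⟨j - 1, by omega⟩ : Fin n) (⟨j, by omega⟩ : Fin n) (1 : ℂ))) =
    ((2 * (if i = j then 1 else 0) - (if i = j + 1 then 1 else 0) -
        (if i = j - 1 then 1 else 0) : ℂ) *
      d ^ (-k * ((if i = j + 1 then 1 else 0) - (if i = j - 1 then (1 : ℤ) else 0)))) •
      Finsupp.single (k + l, 0) (d ^ (((n : ℤ) - j) * (l + k)) •
        Matrix.single (⟨j - 1, by omega⟩ : Fin n) (⟨j, by omega⟩ : Fin n) (1 : ℂ)) := by
  change _ = (cartanA i j * d ^ (-k * cartanM i j)) • _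
  rw [dbr_single_zero_single_zero, smul_lie, lie_smul,
    lie_coroot_single_eq_cartanA_smul hi (by omega) hj (by omega), smul_smul, smul_smul,
    Finsupp.smul_single, smul_smul, zpow_mul_zpow_mul_cartanA hd n hj k l]
end
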